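/- Let u₀ ∈ L¹(ℝ) be nonnegative, compactly supported and continuous with u₀ ≢ 0, set α = ∫_ℝ u₀(x) dx > 0, and let w(t,·) = Γ(t,·) * u₀ where Γ(t,x) = (4πt)^{−1/2} e^{−x²/(4t)} is the heat kernel. Then ∫_{−√t/2}^{√t/2} w³(t,x) dx = o(1/t) + (1/t)(α/√(4π))³ ∫_{−1/2}^{1/2} e^{−3y²/4} dy as t → +∞; in particular, lim_{t→+∞} t ∫_{−√t/2}^{√t/2} w³(t,x) dx = (α/√(4π))³ ∫_{−1/2}^{1/2} e^{−3y²/4} dy > 0. -/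

import Mathlib

open MeasureTheory Filter Set

/-- The one-dimensional heat kernel `Γ(t,x) = (4πt)^{−1/2} e^{−x²/(4t)}`. -/
noncomputable def heatKernel (t x : ℝ) : ℝ :=
  (Real.sqrt (4 * Real.pi * t))⁻¹ * Real.exp (-(x ^ 2) / (4 * t))

/-- The solution `w(t,·) = Γ(t,·) * u₀` of the heat equation with data `u₀`. -/
noncomputable def heatConv (u₀ : ℝ → ℝ) (t x : ℝ) : ℝ :=
  ∫ y, heatKernel t (x - y) * u₀ y

lemma sqrt_tendsto_atTop' : Tendsto Real.sqrt atTop atTop :=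
  tendsto_atTop_atTop_of_monotone (fun _ _ h => Real.sqrt_le_sqrt h)
    (fun b => ⟨b ^ 2, by rw [Real.sqrt_sq_eq_abs]; exact le_abs_self b⟩)

/-- **Cubic moment asymptotics for the heat semigroup.** For nonnegative,
compactly supported, continuous `u₀ ≢ 0` with mass `α = ∫ u₀ > 0` and
`w(t,·) = Γ(t,·) * u₀`, one has
`t ∫_{−√t/2}^{√t/2} w³(t,x) dx → (α/√(4π))³ ∫_{−1/2}^{1/2} e^{−3y²/4} dy > 0`
as `t → +∞`. -/
theorem heat_cube_asymptotics
    (u₀ : ℝ → ℝ) (hu₀_cont : Continuous u₀) (hu₀_supp : HasCompactSupport u₀)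
    (hu₀_int : MeasureTheory.Integrable u₀)
    (hu₀_nonneg : ∀ x, 0 ≤ u₀ x) (hu₀_ne : ∃ x, u₀ x ≠ 0) :
    Filter.Tendsto
      (fun t => t * ∫ x in Set.Ioo (-Real.sqrt t / 2) (Real.sqrt t / 2),
        (heatConv u₀ t x) ^ 3)
      Filter.atTop
      (nhds (((∫ x : ℝ, u₀ x) / Real.sqrt (4 * Real.pi)) ^ 3
        * ∫ y in Set.Ioo (-(1 : ℝ) / 2) (1 / 2), Real.exp (-(3 * y ^ 2) / 4))) ∧
    0 < ((∫ x : ℝ, u₀ x) / Real.sqrt (4 * Real.pi)) ^ 3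
        * ∫ y in Set.Ioo (-(1 : ℝ) / 2) (1 / 2), Real.exp (-(3 * y ^ 2) / 4) := by
  have hπ : (0:ℝ) < 4 * Real.pi := by positivity
  set α := ∫ x : ℝ, u₀ x with hα_def
  have hsqπ : 0 < Real.sqrt (4 * Real.pi) := Real.sqrt_pos.mpr hπ
  set c : ℝ := (Real.sqrt (4 * Real.pi))⁻¹ with hc_def
  have hc_pos : 0 < c := inv_pos.mpr hsqπ
  -- positivity of the mass
  have hα_pos : 0 < α := by
    rw [hα_def, integral_pos_iff_support_of_nonneg hu₀_nonneg hu₀_int]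
    obtain ⟨x₀, hx₀⟩ := hu₀_ne
    have hopen : IsOpen (Function.support u₀) := by
      rw [Function.support_eq_preimage]
      exact isOpen_compl_singleton.preimage hu₀_cont
    exact hopen.measure_pos volume ⟨x₀, hx₀⟩
  -- exponential factor is at most 1
  have hE1 : ∀ t : ℝ, 0 < t → ∀ s : ℝ, Real.exp (-(s ^ 2) / (4 * t)) ≤ 1 := by
    intro t ht s
    rw [Real.exp_le_one_iff]
    apply div_nonpos_of_nonpos_of_nonneg (neg_nonpos.mpr (sq_nonneg _))
    positivity
  -- key pointwise identity for t > 0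
  have hw_eq : ∀ t : ℝ, 0 < t → ∀ x : ℝ,
      Real.sqrt t * heatConv u₀ t x
        = ∫ y, c * Real.exp (-((x - y) ^ 2) / (4 * t)) * u₀ y := by
    intro t ht x
    rw [heatConv, ← integral_const_mul]
    congr 1; funext y
    rw [heatKernel]
    have hst : Real.sqrt t ≠ 0 := ne_of_gt (Real.sqrt_pos.mpr ht)
    rw [Real.sqrt_mul hπ.le]
    rw [hc_def]
    field_simp
  -- nonnegativity of heatConv
  have hw_nonneg : ∀ t x : ℝ, 0 ≤ heatConv u₀ t x := by
    intro t x
    apply integral_nonneg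
    intro y
    exact mul_nonneg (mul_nonneg (inv_nonneg.mpr (Real.sqrt_nonneg _)) (Real.exp_pos _).le)
      (hu₀_nonneg y)
  -- uniform bound for the rescaled solution
  have hB : ∀ t : ℝ, 0 < t → ∀ x : ℝ,
      0 ≤ Real.sqrt t * heatConv u₀ t x ∧ Real.sqrt t * heatConv u₀ t x ≤ c * α := by
    intro t ht x
    constructor
    · exact mul_nonneg (Real.sqrt_nonneg _) (hw_nonneg t x)
    · rw [hw_eq t ht x]
      have hmeas : AEStronglyMeasurable (fun y => c * Real.exp (-((x - y) ^ 2) / (4 * t)) * u₀ y)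
          volume := by
        apply Continuous.aestronglyMeasurable
        fun_prop
      have hle : ∀ y : ℝ, c * Real.exp (-((x - y) ^ 2) / (4 * t)) * u₀ y ≤ c * u₀ y := by
        intro y
        have h1 := hE1 t ht (x - y)
        calc c * Real.exp (-((x - y) ^ 2) / (4 * t)) * u₀ y
            ≤ c * 1 * u₀ y := by
              apply mul_le_mul_of_nonneg_right _ (hu₀_nonneg y)
              exact mul_le_mul_of_nonneg_left h1 hc_pos.le
          _ = c * u₀ y := by ring
      have hInt : Integrable (fun y => c * Real.exp (-((x - y) ^ 2) / (4 * t)) * u₀ y) volume := by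
        apply (hu₀_int.const_mul c).mono' hmeas
        filter_upwards with y
        rw [Real.norm_eq_abs, abs_of_nonneg
          (mul_nonneg (mul_nonneg hc_pos.le (Real.exp_pos _).le) (hu₀_nonneg y))]
        exact hle y
      calc (∫ y, c * Real.exp (-((x - y) ^ 2) / (4 * t)) * u₀ y)
          ≤ ∫ y, c * u₀ y := integral_mono hInt (hu₀_int.const_mul c) hle
        _ = c * α := by rw [integral_const_mul]
  -- continuity of heatConv for t > 0
  have hContW : ∀ t : ℝ, 0 < t → Continuous (heatConv u₀ t) := by
    intro t ht
    have hKle : ∀ s : ℝ, heatKernel t s ≤ (Real.sqrt (4 * Real.pi * t))⁻¹ := by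
      intro s
      rw [heatKernel]
      calc (Real.sqrt (4 * Real.pi * t))⁻¹ * Real.exp (-(s ^ 2) / (4 * t))
          ≤ (Real.sqrt (4 * Real.pi * t))⁻¹ * 1 :=
            mul_le_mul_of_nonneg_left (hE1 t ht s) (by positivity)
        _ = (Real.sqrt (4 * Real.pi * t))⁻¹ := mul_one _
    have hKnonneg : ∀ s : ℝ, 0 ≤ heatKernel t s := fun s =>
      mul_nonneg (inv_nonneg.mpr (Real.sqrt_nonneg _)) (Real.exp_pos _).le
    have hKcont : Continuous (heatKernel t) := by
      unfold heatKernel; fun_prop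
    apply continuous_of_dominated (μ := volume)
      (bound := fun y => (Real.sqrt (4 * Real.pi * t))⁻¹ * u₀ y)
    · intro x
      exact ((hKcont.comp (continuous_const.sub continuous_id)).mul hu₀_cont).aestronglyMeasurable
    · intro x
      filter_upwards with y
      rw [Real.norm_eq_abs, abs_of_nonneg (mul_nonneg (hKnonneg _) (hu₀_nonneg y))]
      exact mul_le_mul_of_nonneg_right (hKle _) (hu₀_nonneg y)
    · exact hu₀_int.const_mul _
    · filter_upwards with y
      exact (hKcont.comp (continuous_id.sub continuous_const)).mul continuous_const
  -- pointwise (in z) limit of the rescaled solution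
  have hA : ∀ z : ℝ, Tendsto (fun t => Real.sqrt t * heatConv u₀ t (Real.sqrt t * z))
      atTop (nhds (c * Real.exp (-(z ^ 2) / 4) * α)) := by
    intro z
    have hlim : Tendsto
        (fun t => ∫ y, c * Real.exp (-((Real.sqrt t * z - y) ^ 2) / (4 * t)) * u₀ y)
        atTop (nhds (∫ y, c * Real.exp (-(z ^ 2) / 4) * u₀ y)) := by
      apply tendsto_integral_filter_of_dominated_convergence (fun y => c * u₀ y)
      · filter_upwards with t
        apply Continuous.aestronglyMeasurable
        fun_prop
      · filter_upwards [eventually_gt_atTop (0:ℝ)] with t ht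
        filter_upwards with y
        rw [Real.norm_eq_abs, abs_of_nonneg
          (mul_nonneg (mul_nonneg hc_pos.le (Real.exp_pos _).le) (hu₀_nonneg y))]
        calc c * Real.exp (-((Real.sqrt t * z - y) ^ 2) / (4 * t)) * u₀ y
            ≤ c * 1 * u₀ y := by
              apply mul_le_mul_of_nonneg_right _ (hu₀_nonneg y)
              exact mul_le_mul_of_nonneg_left (hE1 t ht _) hc_pos.le
          _ = c * u₀ y := by ring
      · exact hu₀_int.const_mul c
      · filter_upwards with y
        have h1 : Tendsto (fun t : ℝ => y / Real.sqrt t) atTop (nhds 0) :=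
          tendsto_const_nhds.div_atTop sqrt_tendsto_atTop'
        have h2 : Tendsto (fun t : ℝ => -((z - y / Real.sqrt t) ^ 2) / 4) atTop
            (nhds (-(z ^ 2) / 4)) := by
          have hcont : Continuous fun s : ℝ => -((z - s) ^ 2) / 4 := by fun_prop
          have := (hcont.tendsto 0).comp h1
          simpa [Function.comp_def] using this
        have h3 : (fun t : ℝ => -((Real.sqrt t * z - y) ^ 2) / (4 * t)) =ᶠ[atTop]
            (fun t => -((z - y / Real.sqrt t) ^ 2) / 4) := by
          filter_upwards [eventually_gt_atTop (0:ℝ)] with t ht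
          have hst : Real.sqrt t ≠ 0 := ne_of_gt (Real.sqrt_pos.mpr ht)
          have hsq : Real.sqrt t ^ 2 = t := Real.sq_sqrt ht.le
          have : z - y / Real.sqrt t = (Real.sqrt t * z - y) / Real.sqrt t := by
            field_simp
          rw [this, div_pow, hsq]
          ring
        have h4 : Tendsto (fun t : ℝ => -((Real.sqrt t * z - y) ^ 2) / (4 * t)) atTop
            (nhds (-(z ^ 2) / 4)) := Tendsto.congr' h3.symm h2
        have h5 := (Real.continuous_exp.tendsto _).comp h4
        exact (tendsto_const_nhds.mul h5).mul tendsto_const_nhds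
    have hval : (∫ y, c * Real.exp (-(z ^ 2) / 4) * u₀ y) = c * Real.exp (-(z ^ 2) / 4) * α := by
      rw [integral_const_mul]
    rw [hval] at hlim
    apply Tendsto.congr' _ hlim
    filter_upwards [eventually_gt_atTop (0:ℝ)] with t ht
    exact (hw_eq t ht (Real.sqrt t * z)).symm
  -- dominated convergence in z over (-1/2, 1/2)
  have hmain : Tendsto
      (fun t => ∫ z in Set.Ioo (-(1:ℝ)/2) (1/2),
        (Real.sqrt t * heatConv u₀ t (Real.sqrt t * z)) ^ 3)
      atTop (nhds (∫ z in Set.Ioo (-(1:ℝ)/2) (1/2),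
        (c * Real.exp (-(z ^ 2) / 4) * α) ^ 3)) := by
    apply tendsto_integral_filter_of_dominated_convergence (fun _ => (c * α) ^ 3)
    · filter_upwards [eventually_gt_atTop (0:ℝ)] with t ht
      apply Continuous.aestronglyMeasurable
      exact (continuous_const.mul ((hContW t ht).comp (continuous_const.mul continuous_id))).pow 3
    · filter_upwards [eventually_gt_atTop (0:ℝ)] with t ht
      filter_upwards with z
      obtain ⟨h0, h1⟩ := hB t ht (Real.sqrt t * z)
      rw [Real.norm_eq_abs, abs_of_nonneg (by positivity)]
      exact pow_le_pow_left₀ h0 h1 3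
    · exact integrableOn_const measure_Ioo_lt_top.ne
    · exact Eventually.of_forall fun z => (hA z).pow 3
  -- identify the limit value
  have hval : (∫ z in Set.Ioo (-(1:ℝ)/2) (1/2), (c * Real.exp (-(z ^ 2) / 4) * α) ^ 3)
      = (α / Real.sqrt (4 * Real.pi)) ^ 3
        * ∫ y in Set.Ioo (-(1:ℝ)/2) (1/2), Real.exp (-(3 * y ^ 2) / 4) := by
    rw [← integral_const_mul]
    apply integral_congr_ae
    filter_upwards with z
    have hexp : Real.exp (-(3 * z ^ 2) / 4) = Real.exp (-(z ^ 2) / 4) ^ 3 := by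
      rw [← Real.exp_nat_mul]
      congr 1
      push_cast
      ring
    rw [hexp, hc_def, div_eq_mul_inv]
    ring
  rw [hval] at hmain
  -- change of variables
  have hcv : (fun t => ∫ z in Set.Ioo (-(1:ℝ)/2) (1/2),
        (Real.sqrt t * heatConv u₀ t (Real.sqrt t * z)) ^ 3) =ᶠ[atTop]
      (fun t => t * ∫ x in Set.Ioo (-Real.sqrt t / 2) (Real.sqrt t / 2),
        (heatConv u₀ t x) ^ 3) := by
    filter_upwards [eventually_gt_atTop (0:ℝ)] with t ht
    have hs : 0 < Real.sqrt t := Real.sqrt_pos.mpr ht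
    have hsq : Real.sqrt t ^ 2 = t := Real.sq_sqrt ht.le
    have e1 : (∫ x in Set.Ioo (-Real.sqrt t / 2) (Real.sqrt t / 2), (heatConv u₀ t x) ^ 3)
        = ∫ x in (-Real.sqrt t / 2)..(Real.sqrt t / 2), (heatConv u₀ t x) ^ 3 := by
      rw [intervalIntegral.integral_of_le (by linarith), integral_Ioc_eq_integral_Ioo]
    have e2 : Real.sqrt t • (∫ z in (-(1:ℝ)/2)..(1/2), (heatConv u₀ t (Real.sqrt t * z)) ^ 3)
        = ∫ x in (Real.sqrt t * (-(1:ℝ)/2))..(Real.sqrt t * (1/2)), (heatConv u₀ t x) ^ 3 :=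
      intervalIntegral.smul_integral_comp_mul_left (fun x => (heatConv u₀ t x) ^ 3) (Real.sqrt t)
    have e3 : Real.sqrt t * (-(1:ℝ)/2) = -Real.sqrt t / 2 := by ring
    have e4 : Real.sqrt t * ((1:ℝ)/2) = Real.sqrt t / 2 := by ring
    rw [e3, e4] at e2
    have e5 : (∫ z in (-(1:ℝ)/2)..(1/2), (Real.sqrt t * heatConv u₀ t (Real.sqrt t * z)) ^ 3)
        = t * Real.sqrt t * ∫ z in (-(1:ℝ)/2)..(1/2), (heatConv u₀ t (Real.sqrt t * z)) ^ 3 := by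
      rw [← intervalIntegral.integral_const_mul]
      apply intervalIntegral.integral_congr
      intro z _
      show (Real.sqrt t * heatConv u₀ t (Real.sqrt t * z)) ^ 3
        = t * Real.sqrt t * heatConv u₀ t (Real.sqrt t * z) ^ 3
      rw [mul_pow]
      congr 1
      rw [pow_succ, hsq]
    rw [e1, ← e2, smul_eq_mul, ← integral_Ioc_eq_integral_Ioo,
      ← intervalIntegral.integral_of_le (show (-(1:ℝ)/2) ≤ 1/2 by norm_num), e5, mul_assoc]
  have htendsto := Tendsto.congr' hcv hmain
  refine ⟨htendsto, ?_⟩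
  have hpos1 : 0 < (α / Real.sqrt (4 * Real.pi)) ^ 3 := by positivity
  have hpos2 : 0 < ∫ y in Set.Ioo (-(1:ℝ)/2) (1/2), Real.exp (-(3 * y ^ 2) / 4) := by
    rw [← integral_Ioc_eq_integral_Ioo,
      ← intervalIntegral.integral_of_le (show (-(1:ℝ)/2) ≤ 1/2 by norm_num)]
    apply intervalIntegral.intervalIntegral_pos_of_pos
    · apply Continuous.intervalIntegrable
      fun_prop
    · intro x; exact Real.exp_pos _
    · norm_num
  exact mul_pos hpos1 hpos2
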